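/- Tower of Hanoi reachability: with states Fin n → Fin 3 (disk i is on peg x i, disk 0 largest) and the move relation M where M x y iff there exists i and distinct pegs p,q,r with x i = p, y i = r, x j = y j for all j ≠ i, and x j = q for all j > i (all smaller disks on the third peg), the reflexive-transitive closure of M is the universal relation: any configuration is reachable from any other. -/

import Mathlib

/-! Move the disks into place from the largest down. If `x` and `y` already agree on the disks
larger than disk `k`, first gather all disks smaller than `k` onto the peg that is neither `x k`
nor `y k` (by induction, the larger disks stay fixed), then move disk `k` to `y k`; now the two
configurations agree on one more disk. -/

open Function Relation

def HanoiMove {n : ℕ} (x y : Fin n → Fin 3) : Prop :=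
  ∃ (i : Fin n) (p q r : Fin 3), p ≠ q ∧ q ≠ r ∧ p ≠ r ∧
    x i = p ∧ y i = r ∧ (∀ j ≠ i, x j = y j) ∧ (∀ j, i < j → x j = q)

lemma Fin.exists_ne_ne_of_ne {p r : Fin 3} (h : p ≠ r) : ∃ q, p ≠ q ∧ q ≠ r := by
  revert p r
  decide

section

variable {n : ℕ}

lemma hanoiMove_update {x : Fin n → Fin 3} {i : Fin n} {q r : Fin 3}
    (hq : x i ≠ q) (hqr : q ≠ r) (hr : x i ≠ r) (hsmall : ∀ j, i < j → x j = q) :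
    HanoiMove x (update x i r) :=
  ⟨i, x i, q, r, hq, hqr, hr, rfl, update_self .., fun _ hj => (update_of_ne hj ..).symm, hsmall⟩

lemma reflTransGen_hanoiMove_of_forall_lt {k : ℕ} (hk : k ≤ n) {x y : Fin n → Fin 3}
    (h : ∀ i : Fin n, ↑i < k → x i = y i) : ReflTransGen HanoiMove x y := by
  induction hk using Nat.decreasingInduction generalizing x y with
  | self => exact funext (fun i => h i i.isLt) ▸ .refl
  | of_succ k hk ih =>
    set i : Fin n := ⟨k, hk⟩
    have hle : ∀ j : Fin n, ↑j < k + 1 → ¬ i < j := fun j hj => not_lt.2 (Nat.lt_succ_iff.1 hj)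
    by_cases hxy : x i = y i
    · refine ih fun j hj => ?_
      rcases Nat.lt_succ_iff_lt_or_eq.1 hj with hjk | hjk
      · exact h j hjk
      · exact (Fin.ext hjk : j = i) ▸ hxy
    obtain ⟨q, hxq, hqy⟩ := Fin.exists_ne_ne_of_ne hxy
    let z : Fin n → Fin 3 := fun j => if i < j then q else x j
    have hxz : ReflTransGen HanoiMove x z := ih fun j hj => (if_neg (hle j hj)).symm
    have hzi : z i = x i := if_neg (lt_irrefl i)
    have hzw : HanoiMove z (update z i (y i)) :=
      hanoiMove_update (hzi ▸ hxq) hqy (hzi ▸ hxy) fun j hj => if_pos hj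
    have hwy : ReflTransGen HanoiMove (update z i (y i)) y := ih fun j hj => by
      rcases eq_or_ne j i with rfl | hji
      · exact update_self ..
      · have hjk : ↑j < k := lt_of_le_of_ne (Nat.lt_succ_iff.1 hj) (Fin.val_ne_of_ne hji)
        rw [update_of_ne hji]
        exact (if_neg (hle j hj)).trans (h j hjk)
    exact (hxz.tail hzw).trans hwy

end

theorem stmt_7 (n : ℕ) (M : (Fin n → Fin 3) → (Fin n → Fin 3) → Prop)
    (hM : ∀ x y, M x y ↔ ∃ (i : Fin n) (p q r : Fin 3),
      p ≠ q ∧ q ≠ r ∧ p ≠ r ∧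
      x i = p ∧ y i = r ∧ (∀ j ≠ i, x j = y j) ∧ (∀ j, i < j → x j = q)) :
    ∀ x y : Fin n → Fin 3, Relation.ReflTransGen M x y := by
  obtain rfl : M = HanoiMove := funext₂ fun x y => propext (hM x y)
  exact fun x y =>
    reflTransGen_hanoiMove_of_forall_lt (Nat.zero_le n) fun _ hi => absurd hi (Nat.not_lt_zero _)
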